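/- arXiv:2106.02440 — 3 statements merged into one kernel-verified Lean document; each statement's English description precedes it below -/
import Mathlib

section
/- Let Δ ≥ 1, let 0 ≤ a ≤ Δ and 0 ≤ k ≤ Δ, and let G be a finite Δ-regular simple graph. If G has a k-outdegree dominating set, i.e., a dominating set S together with an orientation of the edges of the induced subgraph G[S] in which every vertex of S has outdegree at most k, then G admits a valid Π_Δ(a,k)-labeling. -/
inductive Lab : Type
  | M | P | O | A | X
  deriving DecidableEq

instance : Fintype Lab where
  elems := {Lab.M, Lab.P, Lab.O, Lab.A, Lab.X}
  complete := by intro x; cases x <;> simp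

/-- Node constraint `N_Δ(a,x)`: the three allowed multisets of size `Δ`. -/
def nodeC (Δ a x : ℕ) (m : Multiset Lab) : Prop :=
  m = Multiset.replicate (Δ - x) Lab.M + Multiset.replicate x Lab.X ∨
  m = Multiset.replicate a Lab.A + Multiset.replicate (Δ - a) Lab.X ∨
  m = Lab.P ::ₘ Multiset.replicate (Δ - 1) Lab.O

/-- Edge constraint `E`: all unordered pairs except `{M,M}, {A,A}, {P,P}, {P,A}, {P,O}`. -/
def edgeC (l₁ l₂ : Lab) : Prop :=
  ¬ ((l₁ = Lab.M ∧ l₂ = Lab.M) ∨ (l₁ = Lab.A ∧ l₂ = Lab.A) ∨ (l₁ = Lab.P ∧ l₂ = Lab.P) ∨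
     (l₁ = Lab.P ∧ l₂ = Lab.A) ∨ (l₁ = Lab.A ∧ l₂ = Lab.P) ∨
     (l₁ = Lab.P ∧ l₂ = Lab.O) ∨ (l₁ = Lab.O ∧ l₂ = Lab.P))

instance (l₁ l₂ : Lab) : Decidable (edgeC l₁ l₂) := by
  unfold edgeC; infer_instance

/-- A valid `Π_Δ(a,x)`-labeling: `ℓ u v` is the label that `u` assigns to the edge `{u,v}`. -/
def validLabeling {V : Type*} [Fintype V] (G : SimpleGraph V) [DecidableRel G.Adj]
    (Δ a x : ℕ) (ℓ : V → V → Lab) : Prop :=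
  (∀ v : V, nodeC Δ a x ((G.neighborFinset v).val.map (ℓ v))) ∧
  (∀ u v : V, G.Adj u v → edgeC (ℓ u v) (ℓ v u))

/-!
Vertices of the dominating set `S` label the edges to a set of exactly `k` neighbours,
containing all their out-neighbours, by `X` and the other edges by `M`; every other vertex
labels the edge to one chosen neighbour in `S` by `P` and its other edges by `O`. An `M`–`M`
edge would join two vertices of `S` with neither one an out-neighbour of the other, which the
orientation rules out, and a `P` never faces an `O` or a `P` since it sits on an edge into `S`.
-/

open Finset

theorem Finset.val_map_ite_mem_of_subset {α β : Type*} {s t : Finset α}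
    [∀ x, Decidable (x ∈ t)] (h : t ⊆ s) (b c : β) :
    s.val.map (fun x => if x ∈ t then b else c) =
      Multiset.replicate #t b + Multiset.replicate (#s - #t) c := by
  classical
  have hsplit : s.val = t.val + (s \ t).val := by
    rw [sdiff_val, add_tsub_cancel_of_le (val_le_iff.mpr h)]
  rw [hsplit, Multiset.map_add, ← card_sdiff_of_subset h]
  congr 1
  · rw [Multiset.map_congr (g := fun _ => b) rfl fun x (hx : x ∈ t) => if_pos hx,
      Multiset.map_const', card_val]
  · rw [Multiset.map_congr (g := fun _ => c) rfl
      fun x (hx : x ∈ s \ t) => if_neg (mem_sdiff.mp hx).2, Multiset.map_const', card_val]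

section DominationLabeling

variable {V : Type*} {S : Set V} {T : V → Finset V} {d : V → V}

open Classical in
/-- The `P`/`O` branch is phrased through membership in `{d v}` so that both branches have the
shape of `Finset.val_map_ite_mem_of_subset`. -/
noncomputable def dominationLabeling (S : Set V) (T : V → Finset V) (d : V → V) :
    V → V → Lab :=
  fun v u => if v ∈ S then (if u ∈ T v then Lab.X else Lab.M)
    else (if u ∈ ({d v} : Finset V) then Lab.P else Lab.O)

open Classical in
theorem dominationLabeling_of_mem {v : V} (hv : v ∈ S) :
    dominationLabeling S T d v = fun u => if u ∈ T v then Lab.X else Lab.M := by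
  funext u
  simp only [dominationLabeling, if_pos hv]

open Classical in
theorem dominationLabeling_of_not_mem {v : V} (hv : v ∉ S) :
    dominationLabeling S T d v = fun u => if u ∈ ({d v} : Finset V) then Lab.P else Lab.O := by
  funext u
  simp only [dominationLabeling, if_neg hv]

theorem edgeC_dominationLabeling {u v : V}
    (hcover : u ∈ S → v ∈ S → v ∈ T u ∨ u ∈ T v) (hd : ∀ w ∉ S, d w ∈ S) :
    edgeC (dominationLabeling S T d u v) (dominationLabeling S T d v u) := by
  unfold dominationLabeling edgeC
  split_ifs <;> simp_all

variable [Fintype V] {G : SimpleGraph V} [DecidableRel G.Adj]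

open Classical in
theorem nodeC_dominationLabeling_of_mem {Δ a k : ℕ} (hreg : G.IsRegularOfDegree Δ) {v : V}
    (hv : v ∈ S) (hTv : T v ⊆ G.neighborFinset v) (hcard : #(T v) = k) :
    nodeC Δ a k ((G.neighborFinset v).val.map (dominationLabeling S T d v)) := by
  left
  rw [dominationLabeling_of_mem hv, val_map_ite_mem_of_subset hTv,
    G.card_neighborFinset_eq_degree, hreg v, hcard, add_comm]

open Classical in
theorem nodeC_dominationLabeling_of_not_mem {Δ a k : ℕ} (hreg : G.IsRegularOfDegree Δ) {v : V}
    (hv : v ∉ S) (hdv : G.Adj v (d v)) :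
    nodeC Δ a k ((G.neighborFinset v).val.map (dominationLabeling S T d v)) := by
  right; right
  have hdv' : {d v} ⊆ G.neighborFinset v := singleton_subset_iff.mpr (by simpa using hdv)
  rw [dominationLabeling_of_not_mem hv, val_map_ite_mem_of_subset hdv',
    G.card_neighborFinset_eq_degree, hreg v, card_singleton, Multiset.replicate_one,
    Multiset.singleton_add]

theorem validLabeling_dominationLabeling {Δ a k : ℕ} (hreg : G.IsRegularOfDegree Δ)
    (hT : ∀ v ∈ S, T v ⊆ G.neighborFinset v ∧ #(T v) = k)
    (hd : ∀ v ∉ S, d v ∈ S ∧ G.Adj v (d v))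
    (hcover : ∀ u v, u ∈ S → v ∈ S → G.Adj u v → v ∈ T u ∨ u ∈ T v) :
    validLabeling G Δ a k (dominationLabeling S T d) := by
  refine ⟨fun v => ?_, fun u v huv =>
    edgeC_dominationLabeling (hcover u v · · huv) fun w hw => (hd w hw).1⟩
  by_cases hv : v ∈ S
  · exact nodeC_dominationLabeling_of_mem hreg hv (hT v hv).1 (hT v hv).2
  · exact nodeC_dominationLabeling_of_not_mem hreg hv (hd v hv).2

end DominationLabeling

theorem stmt_0_general {V : Type*} [Fintype V] (G : SimpleGraph V) [DecidableRel G.Adj]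
    (Δ a k : ℕ) (hk : k ≤ Δ)
    (hreg : G.IsRegularOfDegree Δ)
    (S : Set V)
    (hdom : ∀ v, v ∉ S → ∃ u ∈ S, G.Adj v u)
    (r : V → V → Prop)
    (hor : ∀ u v, u ∈ S → v ∈ S → G.Adj u v → (r u v ↔ ¬ r v u))
    (hout : ∀ v ∈ S, {u | r v u}.ncard ≤ k) :
    ∃ ℓ : V → V → Lab, validLabeling G Δ a k ℓ := by
  classical
  have hOut : ∀ v ∈ S, #{u ∈ G.neighborFinset v | r v u} ≤ k := fun v hv => by
    rw [← Set.ncard_coe_finset]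
    exact (Set.ncard_le_ncard (by simp +contextual) (Set.toFinite _)).trans (hout v hv)
  choose! T hOutT hT using fun v hv =>
    exists_subsuperset_card_eq (filter_subset _ _) (hOut v hv)
      (by rw [G.card_neighborFinset_eq_degree, hreg v]; exact hk)
  choose! d hd using hdom
  refine ⟨dominationLabeling S T d, validLabeling_dominationLabeling hreg hT hd
    fun u v hu hv huv => ?_⟩
  have hr : r u v ∨ r v u := by
    by_contra! h
    exact h.1 ((hor u v hu hv huv).mpr h.2)
  rcases hr with h | h
  · exact .inl (hOutT u hu (by simpa [huv]))
  · exact .inr (hOutT v hv (by simpa [huv.symm]))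

/-- If a finite `Δ`-regular simple graph has a `k`-outdegree dominating set
(a dominating set `S` with an orientation `r` of the edges of `G[S]` in which every vertex of
`S` has outdegree at most `k`), then `G` admits a valid `Π_Δ(a,k)`-labeling. -/
theorem stmt_0 {V : Type*} [Fintype V] (G : SimpleGraph V) [DecidableRel G.Adj]
    (Δ a k : ℕ) (hΔ : 1 ≤ Δ) (ha : a ≤ Δ) (hk : k ≤ Δ)
    (hreg : G.IsRegularOfDegree Δ)
    (S : Set V)
    (hdom : ∀ v, v ∉ S → ∃ u ∈ S, G.Adj v u)
    (r : V → V → Prop)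
    (hr : ∀ u v, r u v → u ∈ S ∧ v ∈ S ∧ G.Adj u v)
    (hor : ∀ u v, u ∈ S → v ∈ S → G.Adj u v → (r u v ↔ ¬ r v u))
    (hout : ∀ v ∈ S, {u | r v u}.ncard ≤ k) :
    ∃ ℓ : V → V → Lab, validLabeling G Δ a k ℓ :=
  stmt_0_general G Δ a k hk hreg S hdom r hor hout
end

section
/- Let Σ be a finite type, let k ≥ 1, and let C be a set of functions from Fin k to Σ (a node constraint on configurations of length k). Say a label b is at least as strong as a label a (with respect to C) if for every f ∈ C and every index i with f(i) = a, the function obtained from f by replacing the value at i with b is also in C. Let B : Fin k → (nonempty subsets of Σ) be such that every transversal g (with g(i) ∈ B(i) for all i) lies in C, and suppose (B(1),…,B(k)) is maximal with this property: there is no tuple (B'(1),…,B'(k)) of subsets with B(i) ⊆ B'(i) for all i, at least one inclusion strict, all of whose transversals lie in C. Then each B(i) is right-closed: if a ∈ B(i) and b is at least as strong as a, then b ∈ B(i). -/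
/-- (Node part of Observation 2.2.) Let `C` be a node constraint on
configurations of length `k` over a finite alphabet. If `B` is a tuple of nonempty label
sets, all of whose transversals lie in `C`, and `B` is maximal with this property, then
each `B i` is right-closed with respect to the strength order induced by `C`. -/
theorem stmt_10 {α : Type*} [Fintype α] (k : ℕ) (hk : 1 ≤ k)
    (C : Set (Fin k → α))
    (B : Fin k → Set α)
    (hne : ∀ i, (B i).Nonempty)
    (hall : ∀ g : Fin k → α, (∀ i, g i ∈ B i) → g ∈ C)
    (hmax : ¬ ∃ B' : Fin k → Set α,
        (∀ i, B i ⊆ B' i) ∧ (∃ i, B i ⊂ B' i) ∧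
        ∀ g : Fin k → α, (∀ i, g i ∈ B' i) → g ∈ C) :
    ∀ i : Fin k, ∀ a ∈ B i, ∀ b : α,
      (∀ f ∈ C, ∀ j : Fin k, f j = a → Function.update f j b ∈ C) → b ∈ B i := by
  intro i a ha b hb
  by_contra hbB
  apply hmax
  refine ⟨Function.update B i (B i ∪ {b}), ?_, ⟨i, ?_⟩, ?_⟩
  · intro j
    by_cases hj : j = i
    · subst hj; simp
    · simp [Function.update_of_ne hj]
  · simp only [Function.update_self]
    exact ⟨Set.subset_union_left, fun hsub => hbB (hsub (Or.inr rfl))⟩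
  · intro g hg
    by_cases hgi : g i ∈ B i
    · apply hall
      intro j
      by_cases hj : j = i
      · subst hj; exact hgi
      · have := hg j; rwa [Function.update_of_ne hj] at this
    · have hgi' : g i = b := by
        have := hg i
        rw [Function.update_self] at this
        rcases this with h | h
        · exact absurd h hgi
        · exact h
      have hC : Function.update g i a ∈ C := by
        apply hall
        intro j
        by_cases hj : j = i
        · subst hj; simpa using ha
        · rw [Function.update_of_ne hj]
          have := hg j; rwa [Function.update_of_ne hj] at this
      have := hb _ hC i (by simp)
      rwa [Function.update_idem, ← hgi', Function.update_eq_self] at this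
end

section
/- Let Δ ≥ 1 and let G be a finite Δ-regular simple graph. Consider the MIS encoding with label alphabet {M, P, O}, node constraint consisting of the two multisets of size Δ {M repeated Δ} and {P once, O repeated Δ−1}, and edge constraint consisting exactly of the unordered pairs {M,P}, {M,O}, {O,O}. Then: (i) for every valid labeling of G for this encoding, the set S of vertices whose incident labels are all M is a maximal independent set of G, i.e., S is an independent set and every vertex not in S has a neighbor in S; (ii) conversely, for every maximal independent set S of G there exists a valid labeling for this encoding in which the vertices whose incident labels are all M are exactly the vertices of S. -/
/-- The label alphabet of the MIS encoding. -/
inductive Lab3 : Type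
  | M | P | O
  deriving DecidableEq

instance : Fintype Lab3 where
  elems := {Lab3.M, Lab3.P, Lab3.O}
  complete := by intro x; cases x <;> simp

/-- Node constraint of the MIS encoding: `M^Δ` and `P O^(Δ−1)`. -/
def nodeMIS (Δ : ℕ) (m : Multiset Lab3) : Prop :=
  m = Multiset.replicate Δ Lab3.M ∨
  m = Lab3.P ::ₘ Multiset.replicate (Δ - 1) Lab3.O

/-- Edge constraint of the MIS encoding: exactly the pairs `{M,P}`, `{M,O}`, `{O,O}`. -/
def edgeMIS (l₁ l₂ : Lab3) : Prop :=
  (l₁ = Lab3.M ∧ (l₂ = Lab3.P ∨ l₂ = Lab3.O)) ∨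
  ((l₁ = Lab3.P ∨ l₁ = Lab3.O) ∧ l₂ = Lab3.M) ∨
  (l₁ = Lab3.O ∧ l₂ = Lab3.O)

/-- A valid labeling for the MIS encoding: `ℓ u v` is the label that `u` assigns to
the edge `{u,v}`. -/
def validMIS {V : Type*} [Fintype V] (G : SimpleGraph V) [DecidableRel G.Adj]
    (Δ : ℕ) (ℓ : V → V → Lab3) : Prop :=
  (∀ v : V, nodeMIS Δ ((G.neighborFinset v).val.map (ℓ v))) ∧
  (∀ u v : V, G.Adj u v → edgeMIS (ℓ u v) (ℓ v u))

/-! The vertices of a valid labeling that label all their edges `M` are independent, since `{M, M}`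
is not an allowed edge. Every other vertex has exactly one `P`-edge; its other end must label it
`M` and so, by the node constraint, labels all its edges `M`: the set is dominating. Conversely,
given a maximal independent set `S`, let its vertices label everything `M`, and let every other
vertex label `P` the edge to one chosen neighbour in `S` and `O` all its other edges. -/

open Finset SimpleGraph

theorem Finset.map_val_ite_eq_cons_replicate {α β : Type*} [DecidableEq α] {s : Finset α} {a : α}
    (ha : a ∈ s) (b c : β) :
    s.val.map (fun x => if x = a then b else c) = b ::ₘ Multiset.replicate (#s - 1) c := by
  rw [← Multiset.cons_erase (Finset.mem_def.1 ha), Multiset.map_cons, if_pos rfl,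
    ← Finset.erase_val, ← Finset.card_erase_of_mem ha,
    Multiset.map_congr rfl fun x hx => if_neg (Finset.ne_of_mem_erase hx), Multiset.map_const']
  rfl

theorem SimpleGraph.exists_dominator {V : Type*} {G : SimpleGraph V} {S : Set V}
    (hdom : ∀ v, v ∉ S → ∃ u ∈ S, G.Adj v u) :
    ∃ d : V → V, ∀ v, v ∉ S → d v ∈ S ∧ G.Adj v (d v) := by
  classical
  refine ⟨fun v => if h : v ∈ S then v else (hdom v h).choose, fun v hv => ?_⟩
  simpa [hv] using (hdom v hv).choose_spec

lemma not_edgeMIS_M_M : ¬ edgeMIS Lab3.M Lab3.M := by simp [edgeMIS]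

lemma edgeMIS_O_O : edgeMIS Lab3.O Lab3.O := by simp [edgeMIS]

lemma edgeMIS.eq_M_of_P_left {l : Lab3} (h : edgeMIS Lab3.P l) : l = Lab3.M := by
  simpa [edgeMIS] using h

lemma edgeMIS_M_left {l : Lab3} (hl : l ≠ Lab3.M) : edgeMIS Lab3.M l := by
  cases l <;> simp_all [edgeMIS]

lemma edgeMIS.symm {l₁ l₂ : Lab3} (h : edgeMIS l₁ l₂) : edgeMIS l₂ l₁ := by
  unfold edgeMIS at *; tauto

def mVertices {V : Type*} (G : SimpleGraph V) (ℓ : V → V → Lab3) : Set V :=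
  {v | ∀ w, G.Adj v w → ℓ v w = Lab3.M}

section ValidToMIS

variable {V : Type*} [Fintype V] {G : SimpleGraph V} [DecidableRel G.Adj] {Δ : ℕ}
  {ℓ : V → V → Lab3}

lemma mem_map_neighborFinset_val {v : V} {a : Lab3} :
    a ∈ (G.neighborFinset v).val.map (ℓ v) ↔ ∃ w, G.Adj v w ∧ ℓ v w = a := by
  simp

lemma validMIS.mem_mVertices_or_exists_eq_P (h : validMIS G Δ ℓ) (v : V) :
    v ∈ mVertices G ℓ ∨
      (∃ w, G.Adj v w ∧ ℓ v w = Lab3.P) ∧ ∀ w, G.Adj v w → ℓ v w ≠ Lab3.M := by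
  rcases h.1 v with hv | hv
  · exact .inl fun w hw =>
      Multiset.eq_of_mem_replicate (hv ▸ mem_map_neighborFinset_val.2 ⟨w, hw, rfl⟩)
  · refine .inr ⟨mem_map_neighborFinset_val.1 (hv ▸ Multiset.mem_cons_self _ _), fun w hw hM => ?_⟩
    have hMmem := hv ▸ mem_map_neighborFinset_val.2 ⟨w, hw, hM⟩
    rcases Multiset.mem_cons.1 hMmem with hMP | hMO
    · exact Lab3.noConfusion hMP
    · exact Lab3.noConfusion (Multiset.eq_of_mem_replicate hMO)

lemma validMIS.not_adj_of_mem_mVertices (h : validMIS G Δ ℓ) {u u' : V}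
    (hu : u ∈ mVertices G ℓ) (hu' : u' ∈ mVertices G ℓ) : ¬ G.Adj u u' := fun hadj => by
  have hedge := h.2 u u' hadj
  rw [hu u' hadj, hu' u hadj.symm] at hedge
  exact not_edgeMIS_M_M hedge

lemma validMIS.exists_adj_mem_mVertices (h : validMIS G Δ ℓ) {v : V}
    (hv : v ∉ mVertices G ℓ) : ∃ u ∈ mVertices G ℓ, G.Adj v u := by
  obtain ⟨⟨w, hvw, hP⟩, -⟩ := (h.mem_mVertices_or_exists_eq_P v).resolve_left hv
  have hM : ℓ w v = Lab3.M := (hP ▸ h.2 v w hvw).eq_M_of_P_left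
  exact ⟨w, (h.mem_mVertices_or_exists_eq_P w).resolve_right fun hw => hw.2 v hvw.symm hM, hvw⟩

end ValidToMIS

section MISToValid

variable {V : Type*} [DecidableEq V] {S : Set V} [DecidablePred (· ∈ S)] {d : V → V}

def misLabeling (S : Set V) [DecidablePred (· ∈ S)] (d : V → V) (u v : V) : Lab3 :=
  if u ∈ S then Lab3.M else if v = d u then Lab3.P else Lab3.O

lemma misLabeling_of_mem {u : V} (hu : u ∈ S) (v : V) : misLabeling S d u v = Lab3.M :=
  if_pos hu

lemma misLabeling_of_notMem {u : V} (hu : u ∉ S) (v : V) :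
    misLabeling S d u v = if v = d u then Lab3.P else Lab3.O :=
  if_neg hu

lemma misLabeling_ne_M {u : V} (hu : u ∉ S) (v : V) : misLabeling S d u v ≠ Lab3.M := by
  rw [misLabeling_of_notMem hu]
  split_ifs <;> simp

variable {G : SimpleGraph V}

lemma nodeMIS_misLabeling [Fintype V] [DecidableRel G.Adj] {Δ : ℕ}
    (hd : ∀ v, v ∉ S → d v ∈ S ∧ G.Adj v (d v)) (hreg : G.IsRegularOfDegree Δ) (v : V) :
    nodeMIS Δ ((G.neighborFinset v).val.map (misLabeling S d v)) := by
  by_cases hv : v ∈ S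
  · left
    simp_rw [misLabeling_of_mem hv, Multiset.map_const', Finset.card_val,
      card_neighborFinset_eq_degree, hreg v]
  · right
    simp_rw [misLabeling_of_notMem hv]
    rw [Finset.map_val_ite_eq_cons_replicate ((mem_neighborFinset G v _).2 (hd v hv).2),
      card_neighborFinset_eq_degree, hreg v]

lemma edgeMIS_misLabeling (hd : ∀ v, v ∉ S → d v ∈ S ∧ G.Adj v (d v))
    (hind : ∀ u ∈ S, ∀ u' ∈ S, ¬ G.Adj u u') {u v : V} (huv : G.Adj u v) :
    edgeMIS (misLabeling S d u v) (misLabeling S d v u) := by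
  by_cases hu : u ∈ S <;> by_cases hv : v ∈ S
  · exact absurd huv (hind u hu v hv)
  · rw [misLabeling_of_mem hu]
    exact edgeMIS_M_left (misLabeling_ne_M hv u)
  · rw [misLabeling_of_mem hv]
    exact (edgeMIS_M_left (misLabeling_ne_M hu v)).symm
  · have hvu : v ≠ d u := fun h => hv (h ▸ (hd u hu).1)
    have huv : u ≠ d v := fun h => hu (h ▸ (hd v hv).1)
    rw [misLabeling_of_notMem hu, misLabeling_of_notMem hv, if_neg hvu, if_neg huv]
    exact edgeMIS_O_O

lemma mVertices_misLabeling (hd : ∀ v, v ∉ S → d v ∈ S ∧ G.Adj v (d v)) :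
    mVertices G (misLabeling S d) = S := by
  ext v
  exact ⟨fun hv => by_contra fun hvS => misLabeling_ne_M hvS _ (hv _ (hd v hvS).2),
    fun hv _ _ => misLabeling_of_mem hv _⟩

end MISToValid

theorem stmt_11_general {V : Type*} [Fintype V] (G : SimpleGraph V) [DecidableRel G.Adj]
    (Δ : ℕ) (hreg : G.IsRegularOfDegree Δ) :
    (∀ ℓ : V → V → Lab3, validMIS G Δ ℓ →
      (∀ u ∈ {v : V | ∀ w, G.Adj v w → ℓ v w = Lab3.M},
       ∀ u' ∈ {v : V | ∀ w, G.Adj v w → ℓ v w = Lab3.M}, ¬ G.Adj u u') ∧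
      (∀ v, v ∉ {v : V | ∀ w, G.Adj v w → ℓ v w = Lab3.M} →
        ∃ u ∈ {v : V | ∀ w, G.Adj v w → ℓ v w = Lab3.M}, G.Adj v u)) ∧
    (∀ S : Set V,
      (∀ u ∈ S, ∀ u' ∈ S, ¬ G.Adj u u') →
      (∀ v, v ∉ S → ∃ u ∈ S, G.Adj v u) →
      ∃ ℓ : V → V → Lab3, validMIS G Δ ℓ ∧
        {v : V | ∀ w, G.Adj v w → ℓ v w = Lab3.M} = S) := by
  classical
  refine ⟨fun ℓ h => ⟨fun u hu u' hu' => h.not_adj_of_mem_mVertices hu hu',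
    fun v hv => h.exists_adj_mem_mVertices hv⟩, fun S hind hdom => ?_⟩
  obtain ⟨d, hd⟩ := exists_dominator hdom
  exact ⟨misLabeling S d, ⟨nodeMIS_misLabeling hd hreg, fun u v => edgeMIS_misLabeling hd hind⟩,
    mVertices_misLabeling hd⟩

/-- (i) For any valid labeling of the MIS encoding on a `Δ`-regular graph,
the set of vertices whose incident labels are all `M` is a maximal independent set;
(ii) conversely, any maximal independent set arises this way from some valid labeling. -/
theorem stmt_11 {V : Type*} [Fintype V] (G : SimpleGraph V) [DecidableRel G.Adj]
    (Δ : ℕ) (hΔ : 1 ≤ Δ) (hreg : G.IsRegularOfDegree Δ) :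
    (∀ ℓ : V → V → Lab3, validMIS G Δ ℓ →
      (∀ u ∈ {v : V | ∀ w, G.Adj v w → ℓ v w = Lab3.M},
       ∀ u' ∈ {v : V | ∀ w, G.Adj v w → ℓ v w = Lab3.M}, ¬ G.Adj u u') ∧
      (∀ v, v ∉ {v : V | ∀ w, G.Adj v w → ℓ v w = Lab3.M} →
        ∃ u ∈ {v : V | ∀ w, G.Adj v w → ℓ v w = Lab3.M}, G.Adj v u)) ∧
    (∀ S : Set V,
      (∀ u ∈ S, ∀ u' ∈ S, ¬ G.Adj u u') →
      (∀ v, v ∉ S → ∃ u ∈ S, G.Adj v u) →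
      ∃ ℓ : V → V → Lab3, validMIS G Δ ℓ ∧
        {v : V | ∀ w, G.Adj v w → ℓ v w = Lab3.M} = S) :=
  stmt_11_general G Δ hreg
end
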